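/- arXiv:2305.16971 — 2 statements merged into one kernel-verified Lean document; each statement's English description precedes it below -/
import Mathlib

section
/- Let N, Q ≥ 1, let 𝓛_t : ℝ^N × ℝ^Q → ℝ for t ∈ ℕ be time-dependent losses whose gradient maps (θ, ε) ↦ ∇_θ 𝓛_t(θ, ε) are C^1, let η_t ≥ 0 be learning rates, and let θ_init ∈ ℝ^N. Define trajectories θ(ε, t) ∈ ℝ^N by θ(ε, 0) = θ_init and θ(ε, t+1) = θ(ε, t) − η_t ∇_θ 𝓛_t(θ(ε, t), ε). Then each map ε ↦ θ(ε, t) is differentiable, and its derivative J_T = ∇_{ε|0} θ(ε, T) at ε = 0 (a linear map ℝ^Q → ℝ^N) satisfies, for every T, J_T = − Σ_{t=0}^{T−1} η_t ∇²_{(ε,θ)} 𝓛_t(θ(0, t), 0) − Σ_{t=0}^{T−1} η_t H_t ∘ J_t, where H_t = ∇²_θ 𝓛_t(θ(0, t), 0) is the Hessian in θ at (θ(0, t), 0) and ∇²_{(ε,θ)} 𝓛_t(θ(0, t), 0) : ℝ^Q → ℝ^N is the derivative in ε of the map ε ↦ ∇_θ 𝓛_t(θ(0, t), ε) at ε = 0.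 -/
/-- Exact first-order sensitivity of the SGD trajectory to the perturbation
(the corrected TracIn formula): with `θ(ε, 0) = θ_init` and
`θ(ε, t+1) = θ(ε, t) − η_t ∇_θ 𝓛_t(θ(ε, t), ε)` where each gradient map is
`C^1`, every map `ε ↦ θ(ε, t)` is differentiable, and the derivative
`J_T = ∇_{ε|0} θ(ε, T)` satisfies
`J_T = − ∑_{t<T} η_t ∇²_{(ε,θ)} 𝓛_t(θ(0,t), 0) − ∑_{t<T} η_t H_t ∘ J_t`,
where `H_t = ∇²_θ 𝓛_t(θ(0,t), 0)`. -/
theorem stmt_6 (N Q : ℕ) (hN : 1 ≤ N) (hQ : 1 ≤ Q)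
    (𝓛 : ℕ → EuclideanSpace ℝ (Fin N) × EuclideanSpace ℝ (Fin Q) → ℝ)
    (G : ℕ → EuclideanSpace ℝ (Fin N) → EuclideanSpace ℝ (Fin Q) → EuclideanSpace ℝ (Fin N))
    (hGgrad : ∀ t θ ε, G t θ ε = gradient (fun θ' => 𝓛 t (θ', ε)) θ)
    (hGsmooth : ∀ t, ContDiff ℝ 1
      (fun p : EuclideanSpace ℝ (Fin N) × EuclideanSpace ℝ (Fin Q) => G t p.1 p.2))
    (η : ℕ → ℝ) (hη : ∀ t, 0 ≤ η t)
    (θinit : EuclideanSpace ℝ (Fin N))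
    (θfn : EuclideanSpace ℝ (Fin Q) → ℕ → EuclideanSpace ℝ (Fin N))
    (hθ0 : ∀ ε, θfn ε 0 = θinit)
    (hθ : ∀ ε t, θfn ε (t + 1) = θfn ε t - η t • G t (θfn ε t) ε) :
    (∀ t, Differentiable ℝ (fun ε => θfn ε t)) ∧
    ∀ T : ℕ,
      fderiv ℝ (fun ε => θfn ε T) 0 =
        -(∑ t ∈ Finset.range T, η t • fderiv ℝ (fun ε => G t (θfn 0 t) ε) 0) -
          ∑ t ∈ Finset.range T, η t •
            (fderiv ℝ (fun θ' => G t θ' 0) (θfn 0 t)).comp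
              (fderiv ℝ (fun ε => θfn ε t) 0) := by
  have hF : ∀ t, Differentiable ℝ
      (fun p : EuclideanSpace ℝ (Fin N) × EuclideanSpace ℝ (Fin Q) => G t p.1 p.2) :=
    fun t => (hGsmooth t).differentiable one_ne_zero
  have hdiff : ∀ t, Differentiable ℝ (fun ε => θfn ε t) := by
    intro t
    induction t with
    | zero => simp only [hθ0]; exact differentiable_const θinit
    | succ t ih =>
      have he : (fun ε => θfn ε (t+1)) = fun ε => θfn ε t - η t • G t (θfn ε t) ε :=
        funext fun ε => hθ ε t
      rw [he]
      exact ih.sub (((hF t).comp (ih.prodMk differentiable_id)).const_smul (η t))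
  refine ⟨hdiff, ?_⟩
  have key : ∀ t, fderiv ℝ (fun ε => G t (θfn ε t) ε) 0 =
      fderiv ℝ (fun ε => G t (θfn 0 t) ε) 0 +
      (fderiv ℝ (fun θ' => G t θ' 0) (θfn 0 t)).comp (fderiv ℝ (fun ε => θfn ε t) 0) := by
    intro t
    set D := fderiv ℝ (fun p : EuclideanSpace ℝ (Fin N) × EuclideanSpace ℝ (Fin Q) =>
      G t p.1 p.2) (θfn 0 t, 0) with hDdef
    have hD : HasFDerivAt (fun p : EuclideanSpace ℝ (Fin N) × EuclideanSpace ℝ (Fin Q) =>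
        G t p.1 p.2) D (θfn 0 t, 0) := ((hF t) _).hasFDerivAt
    set J := fderiv ℝ (fun ε => θfn ε t) 0 with hJdef
    have hJ : HasFDerivAt (fun ε => θfn ε t) J 0 := ((hdiff t) 0).hasFDerivAt
    have h1 : HasFDerivAt (fun ε : EuclideanSpace ℝ (Fin Q) => (θfn ε t, ε))
        (J.prod (ContinuousLinearMap.id ℝ _)) 0 := HasFDerivAt.prodMk hJ (hasFDerivAt_id 0)
    have hcomp : HasFDerivAt (fun ε => G t (θfn ε t) ε)
        (D.comp (J.prod (ContinuousLinearMap.id ℝ _))) 0 :=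
      HasFDerivAt.comp (f := fun ε => (θfn ε t, ε)) 0 hD h1
    have hθpart : HasFDerivAt (fun θ' => G t θ' 0)
        (D.comp (ContinuousLinearMap.inl ℝ _ _)) (θfn 0 t) := by
      have h2 : HasFDerivAt (fun θ' : EuclideanSpace ℝ (Fin N) =>
          (θ', (0 : EuclideanSpace ℝ (Fin Q))))
          (ContinuousLinearMap.inl ℝ _ _) (θfn 0 t) :=
        HasFDerivAt.prodMk (hasFDerivAt_id _) (hasFDerivAt_const _ _)
      exact HasFDerivAt.comp (f := fun θ' : EuclideanSpace ℝ (Fin N) =>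
        (θ', (0 : EuclideanSpace ℝ (Fin Q)))) _ hD h2
    have hεpart : HasFDerivAt (fun ε => G t (θfn 0 t) ε)
        (D.comp (ContinuousLinearMap.inr ℝ _ _)) 0 := by
      have h2 : HasFDerivAt (fun ε : EuclideanSpace ℝ (Fin Q) => (θfn 0 t, ε))
          (ContinuousLinearMap.inr ℝ _ _) 0 :=
        HasFDerivAt.prodMk (hasFDerivAt_const _ _) (hasFDerivAt_id _)
      exact HasFDerivAt.comp (f := fun ε : EuclideanSpace ℝ (Fin Q) => (θfn 0 t, ε)) _ hD h2
    rw [hcomp.fderiv, hθpart.fderiv, hεpart.fderiv]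
    ext x
    simp only [ContinuousLinearMap.comp_apply, ContinuousLinearMap.prod_apply,
      ContinuousLinearMap.inl_apply, ContinuousLinearMap.inr_apply,
      ContinuousLinearMap.add_apply, ContinuousLinearMap.coe_id', id_eq]
    have hx : ((J x, x) : EuclideanSpace ℝ (Fin N) × EuclideanSpace ℝ (Fin Q))
        = (0, x) + (J x, 0) := by simp [Prod.ext_iff]
    rw [hx, map_add]
  intro T
  induction T with
  | zero => simp [hθ0]
  | succ T ih =>
    have he : (fun ε => θfn ε (T+1)) = fun ε => θfn ε T - η T • G T (θfn ε T) ε :=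
      funext fun ε => hθ ε T
    have hGd : DifferentiableAt ℝ (fun ε => G T (θfn ε T) ε) 0 :=
      ((hF T).comp ((hdiff T).prodMk differentiable_id)) 0
    rw [he, fderiv_fun_sub (g := fun ε => η T • G T (θfn ε T) ε) ((hdiff T) 0) (hGd.const_smul (η T)), fderiv_fun_const_smul hGd,
      key T, Finset.sum_range_succ, Finset.sum_range_succ, ih, smul_add]
    abel
end

section
/- Let N, Q ≥ 1, let 𝓛_t : ℝ^N × ℝ^Q → ℝ for t ∈ ℕ be time-dependent losses, let η_t ≥ 0 be learning rates, and let θ_init ∈ ℝ^N. Fix ε ∈ ℝ^Q and define the two trajectories θ(ε, t) and θ(0, t) by θ(ε, 0) = θ(0, 0) = θ_init, θ(ε, t+1) = θ(ε, t) − η_t ∇_θ 𝓛_t(θ(ε, t), ε) and θ(0, t+1) = θ(0, t) − η_t ∇_θ 𝓛_t(θ(0, t), 0). Let T ∈ ℕ and let R ⊆ ℝ^N be a set containing θ(ε, t) and θ(0, t) for all t ≤ T. Assume there are constants C, A ≥ 0 such that (i) ‖∇_θ 𝓛_t(θ, ε) − ∇_θ 𝓛_t(θ, 0)‖ ≤ C‖ε‖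 for all t < T and all θ ∈ R, and (ii) for each t < T the map θ ↦ ∇_θ 𝓛_t(θ, 0) is A-Lipschitz on R. Then ‖θ(ε, T) − θ(0, T)‖ ≤ C‖ε‖ (Σ_{s<T} η_s) (1 + exp(2A Σ_{s<T} η_s)). -/
/-! One gradient step increases the distance `d_t` between the two trajectories by at
most `η_t (C‖ε‖ + A d_t)`: the perturbation costs `C‖ε‖` and the Lipschitz gradient
amplifies the existing gap. The discrete Grönwall inequality turns
`d_{t+1} ≤ (1 + A η_t) d_t + C‖ε‖ η_t` with `d_0 = 0` into
`d_T ≤ C‖ε‖ (∑ η) exp (A ∑ η)`, which is below the stated bound. -/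

open Finset Real

theorem discrete_gronwall_range {u b c : ℕ → ℝ} {T : ℕ} (hu₀ : 0 ≤ u 0)
    (hu : ∀ n < T, u (n + 1) ≤ (1 + c n) * u n + b n) (hc : ∀ n < T, 0 ≤ c n)
    (hb : ∀ n < T, 0 ≤ b n) :
    u T ≤ (u 0 + ∑ k ∈ range T, b k) * exp (∑ k ∈ range T, c k) := by
  -- Freeze `u` from time `T` on and switch `b`, `c` off there, so the recursion holds forever.
  have key := discrete_gronwall (u := fun n => u (min n T))
    (c := fun n => if n < T then c n else 0) (b := fun n => if n < T then b n else 0)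
    (n₀ := 0) (by simpa using hu₀) ?_ ?_ ?_ (Nat.zero_le T)
  · have hsum (f : ℕ → ℝ) :
        ∑ k ∈ Ico 0 T, (if k < T then f k else 0) = ∑ k ∈ range T, f k := by
      rw [Nat.Ico_zero_eq_range]
      exact sum_congr rfl fun k hk => if_pos (mem_range.1 hk)
    simpa only [min_self, Nat.zero_min, hsum] using key
  · intro n _
    by_cases hn : n < T
    · simpa [hn, Nat.min_eq_left hn.le, Nat.min_eq_left (Nat.succ_le_of_lt hn)] using hu n hn
    · have hTn : T ≤ n := not_lt.1 hn
      simp [hn, Nat.min_eq_right hTn, Nat.min_eq_right (Nat.le_succ_of_le hTn)]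
  · intro n _
    split_ifs with hn
    exacts [hc n hn, le_rfl]
  · intro n _
    split_ifs with hn
    exacts [hb n hn, le_rfl]

theorem norm_sub_smul_sub_sub_smul_le {E : Type*} [SeminormedAddCommGroup E] [NormedSpace ℝ E]
    (x y g h : E) {η : ℝ} (hη : 0 ≤ η) :
    ‖(x - η • g) - (y - η • h)‖ ≤ ‖x - y‖ + η * ‖g - h‖ := by
  calc ‖(x - η • g) - (y - η • h)‖ = ‖(x - y) - η • (g - h)‖ := by
        rw [smul_sub, sub_sub_sub_comm]
    _ ≤ ‖x - y‖ + ‖η • (g - h)‖ := norm_sub_le _ _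
    _ = ‖x - y‖ + η * ‖g - h‖ := by rw [norm_smul, Real.norm_of_nonneg hη]

theorem norm_sub_le_of_descent_steps {E : Type*} [SeminormedAddCommGroup E] [NormedSpace ℝ E]
    {x y : ℕ → E} {F H : ℕ → E → E} {η : ℕ → ℝ} {A K : ℝ} {T : ℕ}
    (hx : ∀ t < T, x (t + 1) = x t - η t • F t (x t))
    (hy : ∀ t < T, y (t + 1) = y t - η t • H t (y t))
    (hη : ∀ t, 0 ≤ η t) (hA : 0 ≤ A) (hK : 0 ≤ K)
    (hFH : ∀ t < T, ‖F t (x t) - H t (y t)‖ ≤ K + A * ‖x t - y t‖) :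
    ‖x T - y T‖ ≤
      (‖x 0 - y 0‖ + K * ∑ s ∈ range T, η s) * exp (A * ∑ s ∈ range T, η s) := by
  have hstep : ∀ t < T, ‖x (t + 1) - y (t + 1)‖ ≤
      (1 + A * η t) * ‖x t - y t‖ + K * η t := fun t ht =>
    calc ‖x (t + 1) - y (t + 1)‖ ≤ ‖x t - y t‖ + η t * ‖F t (x t) - H t (y t)‖ := by
          rw [hx t ht, hy t ht]
          exact norm_sub_smul_sub_sub_smul_le _ _ _ _ (hη t)
      _ ≤ ‖x t - y t‖ + η t * (K + A * ‖x t - y t‖) :=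
          add_le_add_right (mul_le_mul_of_nonneg_left (hFH t ht) (hη t)) _
      _ = (1 + A * η t) * ‖x t - y t‖ + K * η t := by ring
  have h := discrete_gronwall_range (u := fun t => ‖x t - y t‖) (norm_nonneg _) hstep
    (fun t _ => mul_nonneg hA (hη t)) (fun t _ => mul_nonneg hK (hη t))
  rwa [← mul_sum, ← mul_sum] at h

theorem stmt_12_general (N Q : ℕ)
    (G : ℕ → EuclideanSpace ℝ (Fin N) → EuclideanSpace ℝ (Fin Q) → EuclideanSpace ℝ (Fin N))
    (η : ℕ → ℝ) (hη : ∀ t, 0 ≤ η t)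
    (θinit : EuclideanSpace ℝ (Fin N))
    (ε : EuclideanSpace ℝ (Fin Q))
    (θe θz : ℕ → EuclideanSpace ℝ (Fin N))
    (hθe0 : θe 0 = θinit) (hθz0 : θz 0 = θinit)
    (hθe : ∀ t, θe (t + 1) = θe t - η t • G t (θe t) ε)
    (hθz : ∀ t, θz (t + 1) = θz t - η t • G t (θz t) 0)
    (T : ℕ) (R : Set (EuclideanSpace ℝ (Fin N)))
    (hR : ∀ t ≤ T, θe t ∈ R ∧ θz t ∈ R)
    (C A : ℝ) (hC : 0 ≤ C) (hA : 0 ≤ A)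
    (hpert : ∀ t < T, ∀ θ ∈ R, ‖G t θ ε - G t θ 0‖ ≤ C * ‖ε‖)
    (hlip : ∀ t < T, ∀ θ ∈ R, ∀ θ' ∈ R, ‖G t θ 0 - G t θ' 0‖ ≤ A * ‖θ - θ'‖) :
    ‖θe T - θz T‖ ≤
      C * ‖ε‖ * (∑ s ∈ Finset.range T, η s) *
        (1 + Real.exp (2 * A * ∑ s ∈ Finset.range T, η s)) := by
  set S := ∑ s ∈ range T, η s
  have hS : 0 ≤ S := sum_nonneg fun s _ => hη s
  have hgap : ∀ t < T, ‖G t (θe t) ε - G t (θz t) 0‖ ≤ C * ‖ε‖ + A * ‖θe t - θz t‖ :=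
    fun t ht => (norm_sub_le_norm_sub_add_norm_sub _ (G t (θe t) 0) _).trans <|
      add_le_add (hpert t ht _ (hR t ht.le).1) (hlip t ht _ (hR t ht.le).1 _ (hR t ht.le).2)
  have hdist := norm_sub_le_of_descent_steps (F := fun t θ => G t θ ε) (H := fun t θ => G t θ 0)
    (K := C * ‖ε‖) (fun t _ => hθe t) (fun t _ => hθz t) hη hA (by positivity) hgap
  rw [hθe0, hθz0, sub_self, norm_zero, zero_add] at hdist
  have hexp : exp (A * S) ≤ 1 + exp (2 * A * S) :=
    (exp_le_exp.2 (by nlinarith [mul_nonneg hA hS])).trans (le_add_of_nonneg_left zero_le_one)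
  calc ‖θe T - θz T‖ ≤ C * ‖ε‖ * S * exp (A * S) := hdist
    _ ≤ C * ‖ε‖ * S * (1 + exp (2 * A * S)) := by gcongr

/-- Parameter-divergence bound (discrete Gronwall consequence): comparing SGD
trajectories on the perturbed loss `𝓛_t(·, ε)` and the unperturbed loss
`𝓛_t(·, 0)` from the same initialization, if the gradient perturbation is
bounded by `C‖ε‖` on a region `R` containing both trajectories up to time `T`
and the unperturbed gradients are `A`-Lipschitz on `R`, then
`‖θ(ε,T) − θ(0,T)‖ ≤ C‖ε‖ (∑_{s<T} η_s) (1 + exp(2A ∑_{s<T} η_s))`. -/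
theorem stmt_12 (N Q : ℕ) (hN : 1 ≤ N) (hQ : 1 ≤ Q)
    (𝓛 : ℕ → EuclideanSpace ℝ (Fin N) × EuclideanSpace ℝ (Fin Q) → ℝ)
    (G : ℕ → EuclideanSpace ℝ (Fin N) → EuclideanSpace ℝ (Fin Q) → EuclideanSpace ℝ (Fin N))
    (hGgrad : ∀ t θ ε', G t θ ε' = gradient (fun θ' => 𝓛 t (θ', ε')) θ)
    (η : ℕ → ℝ) (hη : ∀ t, 0 ≤ η t)
    (θinit : EuclideanSpace ℝ (Fin N))
    (ε : EuclideanSpace ℝ (Fin Q))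
    (θe θz : ℕ → EuclideanSpace ℝ (Fin N))
    (hθe0 : θe 0 = θinit) (hθz0 : θz 0 = θinit)
    (hθe : ∀ t, θe (t + 1) = θe t - η t • G t (θe t) ε)
    (hθz : ∀ t, θz (t + 1) = θz t - η t • G t (θz t) 0)
    (T : ℕ) (R : Set (EuclideanSpace ℝ (Fin N)))
    (hR : ∀ t ≤ T, θe t ∈ R ∧ θz t ∈ R)
    (C A : ℝ) (hC : 0 ≤ C) (hA : 0 ≤ A)
    (hpert : ∀ t < T, ∀ θ ∈ R, ‖G t θ ε - G t θ 0‖ ≤ C * ‖ε‖)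
    (hlip : ∀ t < T, ∀ θ ∈ R, ∀ θ' ∈ R, ‖G t θ 0 - G t θ' 0‖ ≤ A * ‖θ - θ'‖) :
    ‖θe T - θz T‖ ≤
      C * ‖ε‖ * (∑ s ∈ Finset.range T, η s) *
        (1 + Real.exp (2 * A * ∑ s ∈ Finset.range T, η s)) :=
  stmt_12_general N Q G η hη θinit ε θe θz hθe0 hθz0 hθe hθz T R hR C A hC hA hpert hlip
end
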